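/- Moments of the Dirichlet distribution as cycle index polynomials: for parameters α ∈ ℝ_{>0}^k and s ∈ ℝ^k, the n-th moment of s·X under Dir(α) satisfies E[(s·X)ⁿ] = [n! / (|α|)_n] · Z_n(p_1, p_2, …, p_n), where p_i = Σ_{j=1}^k s_j^i α_j and Z_n is the cycle index polynomial of S_n. Equivalently, Σ_{m ∈ ℕ^k, |m|=n} (sᵐ/m!) (α)_m = Z_n(p_1,…,p_n), where (α)_m = ∏_j (α_j)_{m_j}. -/

import Mathlib

/-- The finset of integer partitions of `n` in frequency representation:
`lam i` is the number of parts of size `i`, with `lam 0 = 0` and `∑ i * lam i = n`. -/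
def freqPartitions (n : ℕ) : Finset (Fin (n+1) → ℕ) :=
  (Fintype.piFinset fun _ => Finset.range (n+1)).filter
    fun lam => lam 0 = 0 ∧ ∑ i, i.1 * lam i = n

/-- The complete Bell polynomial `B_n(x_1, …, x_n)`. -/
def bellPoly {R : Type*} [CommRing R] (n : ℕ) (x : ℕ → R) : R :=
  ∑ lam ∈ freqPartitions n,
    ((n.factorial / ∏ i, Nat.factorial i.1 ^ lam i * Nat.factorial (lam i) : ℕ) : R) *
      ∏ i, x i.1 ^ lam i
/-- The cycle index polynomial `Z_n(x_1, …, x_n)` of the symmetric group `S_n`. -/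
noncomputable def cycleIndex {K : Type*} [Field K] (n : ℕ) (x : ℕ → K) : K :=
  (n.factorial : K)⁻¹ *
    ∑ lam ∈ freqPartitions n,
      ((n.factorial / ∏ i, i.1 ^ lam i * Nat.factorial (lam i) : ℕ) : K) *
        ∏ i, x i.1 ^ lam i

/-!
Both sides are the coefficients `a_n` of solutions of `n a_n = ∑_{i=1}^n p_i a_{n-i}`,
`a_0 = 1`, which determines them. On the left, `∑_n a_n X^n = ∏_j (1 - s_j X)^{-α_j}` and
`X F' / F` is additive over products, the factor `j` contributing `α_j ∑_{i ≥ 1} s_j^i X^i`.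
On the right, weight a partition `λ` of `n` by `∏_i (p_i / i)^{λ_i} / λ_i!`: removing one part
of size `i` turns `i λ_i` times the weight of `λ` into `p_i` times the weight of a partition
of `n - i`.
-/

open Finset PowerSeries

section PowerSeries

variable {R : Type*} [CommSemiring R]

theorem PowerSeries.X_mul_derivative_prod {ι : Type*} (s : Finset ι) (F P : ι → R⟦X⟧)
    (h : ∀ i ∈ s, X * d⁄dX R (F i) = P i * F i) :
    X * d⁄dX R (∏ i ∈ s, F i) = (∑ i ∈ s, P i) * ∏ i ∈ s, F i := by
  classical
  induction s using Finset.induction_on with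
  | empty => simp
  | insert j s hj ih =>
    rw [prod_insert hj, sum_insert hj, Derivation.leibniz, smul_eq_mul, smul_eq_mul,
      mul_add, mul_left_comm, ih fun i hi => h i (mem_insert_of_mem hi), mul_left_comm X,
      h j (mem_insert_self j s)]
    ring

theorem PowerSeries.nat_mul_coeff_of_X_mul_derivative {A P : R⟦X⟧}
    (h : X * d⁄dX R A = P * A) (hP : constantCoeff P = 0) (n : ℕ) :
    n * coeff n A = ∑ i ∈ Icc 1 n, coeff i P * coeff (n - i) A := by
  have := congrArg (coeff n) h
  cases n with
  | zero => simp
  | succ n =>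
    rw [coeff_succ_X_mul, coeff_derivative, coeff_mul,
      Nat.sum_antidiagonal_eq_sum_range_succ_mk, sum_range_succ'] at this
    rw [← Ico_add_one_right_eq_Icc, sum_Ico_eq_sum_range]
    simpa [hP, mul_comm, add_comm 1] using this

theorem PowerSeries.coeff_prod_eq_sum_antidiagonalTuple {k : ℕ} (F : Fin k → R⟦X⟧)
    (n : ℕ) :
    coeff n (∏ j, F j) = ∑ m ∈ Nat.antidiagonalTuple k n, ∏ j, coeff (m j) (F j) := by
  classical
  rw [coeff_prod, finsuppAntidiag, sum_map, ← piAntidiag_univ_fin_eq_antidiagonalTuple,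
    ← sum_attach (piAntidiag univ n) fun m => ∏ j, coeff (m j) (F j)]
  rfl

end PowerSeries

theorem PowerSeries.C_mul_X_mul_mk_pow {R : Type*} [CommRing R] (x : R) :
    C x * X * PowerSeries.mk (x ^ ·) = PowerSeries.mk (x ^ ·) - 1 := by
  ext n
  cases n with
  | zero => simp
  | succ n => simp [mul_assoc, coeff_succ_X_mul, pow_succ', coeff_one]

@[to_additive]
theorem Fintype.prod_apply_update {ι α M : Type*} [Fintype ι] [DecidableEq ι] [CommMonoid M]
    (g : ι → α → M) (f : ι → α) (i : ι) (v : α) :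
    ∏ l, g l (Function.update f i v l) = g i v * ∏ l ∈ {i}ᶜ, g l (f l) := by
  rw [Fintype.prod_eq_mul_prod_compl i, Function.update_self]
  refine congrArg (g i v * ·) (Finset.prod_congr rfl fun l hl => ?_)
  rw [Function.update_of_ne (by simpa using hl)]

theorem eq_of_nat_mul_eq_sum_Icc {R : Type*} [CommRing R] [IsDomain R] [CharZero R]
    {p a b : ℕ → R} {N : ℕ}
    (ha : ∀ n ≤ N, n * a n = ∑ i ∈ Icc 1 n, p i * a (n - i))
    (hb : ∀ n ≤ N, n * b n = ∑ i ∈ Icc 1 n, p i * b (n - i)) (h0 : a 0 = b 0) :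
    ∀ n ≤ N, a n = b n := by
  intro n
  induction n using Nat.strong_induction_on with
  | _ n ih =>
    intro hn
    rcases Nat.eq_zero_or_pos n with rfl | hpos
    · exact h0
    · refine mul_left_cancel₀ (Nat.cast_ne_zero.2 hpos.ne') ?_
      rw [ha n hn, hb n hn]
      refine sum_congr rfl fun i hi => ?_
      rw [mem_Icc] at hi
      rw [ih (n - i) (by omega) (by omega)]

/-- Frequency vectors of the partitions of `n` on the fixed index type `Fin (N+1)`, so that
partitions of `n` and of `n - i` can be compared; `freqPartitions n` is `freqPartitionsUpTo n n`. -/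
def freqPartitionsUpTo (N n : ℕ) : Finset (Fin (N+1) → ℕ) :=
  (Fintype.piFinset fun _ => range (N+1)).filter fun lam => lam 0 = 0 ∧ ∑ i, i.1 * lam i = n

theorem le_of_mem_freqPartitionsUpTo {N n : ℕ} {lam : Fin (N+1) → ℕ}
    (h : lam ∈ freqPartitionsUpTo N n) (i : Fin (N+1)) : i.1 * lam i ≤ n := by
  rw [freqPartitionsUpTo, mem_filter] at h
  exact h.2.2 ▸ single_le_sum (f := fun l : Fin (N+1) => l.1 * lam l) (by simp) (mem_univ i)

theorem mem_freqPartitionsUpTo {N n : ℕ} (hn : n ≤ N) {lam : Fin (N+1) → ℕ} :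
    lam ∈ freqPartitionsUpTo N n ↔ lam 0 = 0 ∧ ∑ i, i.1 * lam i = n := by
  refine ⟨fun h => (mem_filter.1 h).2,
    fun h => mem_filter.2 ⟨Fintype.mem_piFinset.2 fun i => ?_, h⟩⟩
  rw [mem_range]
  rcases eq_or_ne i 0 with rfl | hi
  · omega
  · have : lam i ≤ i.1 * lam i := Nat.le_mul_of_pos_left _ (Fin.pos_iff_ne_zero.2 hi)
    have := h.2 ▸ single_le_sum (f := fun l : Fin (N+1) => l.1 * lam l) (by simp) (mem_univ i)
    omega

theorem sum_freqPartitionsUpTo_filter_pos {M : Type*} [AddCommMonoid M] {N n : ℕ} (hn : n ≤ N)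
    {i : Fin (N+1)} (hi : i ≠ 0) (hin : i.1 ≤ n) (F : (Fin (N+1) → ℕ) → M) :
    ∑ lam ∈ freqPartitionsUpTo N n with 0 < lam i, F lam
      = ∑ lam ∈ freqPartitionsUpTo N (n - i), F (Function.update lam i (lam i + 1)) := by
  have hweight (lam : Fin (N+1) → ℕ) (v : ℕ) :
      ∑ l, l.1 * Function.update lam i v l + i.1 * lam i = ∑ l, l.1 * lam l + i.1 * v := by
    rw [Fintype.sum_apply_update, Fintype.sum_eq_add_sum_compl i]
    ring
  refine sum_nbij' (fun lam => Function.update lam i (lam i - 1))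
    (fun lam => Function.update lam i (lam i + 1)) ?_ ?_ ?_ ?_ ?_
  · intro lam hlam
    rw [mem_filter, mem_freqPartitionsUpTo hn] at hlam
    rw [mem_freqPartitionsUpTo (by omega), Function.update_of_ne hi.symm]
    have hw := hweight lam (lam i - 1)
    have hpart : i.1 * lam i = i.1 * (lam i - 1) + i.1 := by
      rw [← Nat.mul_add_one, Nat.sub_add_cancel hlam.2]
    exact ⟨hlam.1.1, by omega⟩
  · intro lam hlam
    rw [mem_freqPartitionsUpTo (by omega)] at hlam
    rw [mem_filter, mem_freqPartitionsUpTo hn, Function.update_of_ne hi.symm,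
      Function.update_self]
    have hw := hweight lam (lam i + 1)
    rw [Nat.mul_add_one] at hw
    exact ⟨⟨hlam.1, by omega⟩, by omega⟩
  · intro lam hlam
    rw [mem_filter] at hlam
    simp [Nat.sub_add_cancel hlam.2]
  · intro lam _
    simp
  · intro lam hlam
    rw [mem_filter] at hlam
    simp [Nat.sub_add_cancel hlam.2]

theorem prod_pow_mul_factorial_dvd_factorial {n : ℕ} {lam : Fin (n+1) → ℕ} (h0 : lam 0 = 0)
    (hsum : ∑ i, i.1 * lam i = n) :
    (∏ i, i.1 ^ lam i * (lam i).factorial) ∣ n.factorial := by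
  have hpart (i : Fin (n+1)) : i.1 ^ lam i * (lam i).factorial ∣ (lam i * i.1).factorial := by
    rcases eq_or_ne i 0 with rfl | hi
    · simp [h0]
    · have hi : i.1 ≠ 0 := Fin.val_ne_zero_iff.2 hi
      have hi_dvd : i.1 ∣ i.1.factorial := Nat.dvd_factorial (by omega) le_rfl
      refine (mul_dvd_mul_right (pow_dvd_pow_of_dvd hi_dvd _) _).trans
        ⟨Nat.uniformBell (lam i) i.1, ?_⟩
      rw [← Nat.uniformBell_mul_eq (lam i) hi]
      ring
  calc (∏ i, i.1 ^ lam i * (lam i).factorial) ∣ ∏ i : Fin (n+1), (lam i * i.1).factorial :=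
        prod_dvd_prod_of_dvd _ _ fun i _ => hpart i
    _ ∣ (∑ i : Fin (n+1), lam i * i.1).factorial := Nat.prod_factorial_dvd_factorial_sum _ _
    _ = n.factorial := by simp_rw [mul_comm (lam _), hsum]

section Field

variable {K : Type*} [Field K] [CharZero K]

/-- The binomial series `(1 - x X)^{-a}`. -/
noncomputable def pochhammerSeries (x a : K) : K⟦X⟧ :=
  mk fun m => x ^ m / m.factorial * (ascPochhammer K m).eval a

theorem succ_mul_coeff_pochhammerSeries (x a : K) (m : ℕ) :
    (m + 1) * coeff (m + 1) (pochhammerSeries x a)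
      = x * (a + m) * coeff m (pochhammerSeries x a) := by
  simp only [pochhammerSeries, coeff_mk, ascPochhammer_succ_eval, Nat.factorial_succ, pow_succ]
  push_cast
  field_simp

theorem one_sub_C_mul_X_mul_derivative_pochhammerSeries (x a : K) :
    (1 - C x * X) * d⁄dX K (pochhammerSeries x a) = C (x * a) * pochhammerSeries x a := by
  ext n
  cases n with
  | zero =>
    rw [sub_mul, one_mul, map_sub, mul_assoc, coeff_C_mul, coeff_zero_X_mul, mul_zero, sub_zero,
      coeff_C_mul, coeff_derivative]
    simpa using succ_mul_coeff_pochhammerSeries x a 0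
  | succ n =>
    simp only [sub_mul, one_mul, mul_assoc, map_sub, coeff_C_mul, coeff_succ_X_mul,
      coeff_derivative]
    have := succ_mul_coeff_pochhammerSeries x a (n + 1)
    push_cast at this ⊢
    linear_combination this

theorem X_mul_derivative_pochhammerSeries (x a : K) :
    X * d⁄dX K (pochhammerSeries x a)
      = C a * (PowerSeries.mk (x ^ ·) - 1) * pochhammerSeries x a := by
  have hG : PowerSeries.mk (x ^ ·) * (1 - C x * X) = 1 := by
    rw [mul_sub, mul_one, mul_comm, C_mul_X_mul_mk_pow, sub_sub_cancel]
  calc X * d⁄dX K (pochhammerSeries x a)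
      = X * PowerSeries.mk (x ^ ·) * ((1 - C x * X) * d⁄dX K (pochhammerSeries x a)) := by
        rw [← mul_assoc, mul_assoc X, hG, mul_one]
    _ = C a * (C x * X * PowerSeries.mk (x ^ ·)) * pochhammerSeries x a := by
        rw [one_sub_C_mul_X_mul_derivative_pochhammerSeries, map_mul]; ring
    _ = C a * (PowerSeries.mk (x ^ ·) - 1) * pochhammerSeries x a := by rw [C_mul_X_mul_mk_pow]

theorem nat_mul_coeff_prod_pochhammerSeries {k : ℕ} (s α : Fin k → K) (n : ℕ) :
    n * coeff n (∏ j, pochhammerSeries (s j) (α j))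
      = ∑ i ∈ Icc 1 n,
          (∑ j, s j ^ i * α j) * coeff (n - i) (∏ j, pochhammerSeries (s j) (α j)) := by
  rw [nat_mul_coeff_of_X_mul_derivative (X_mul_derivative_prod univ _ _
    fun j _ => X_mul_derivative_pochhammerSeries (s j) (α j)) (by simp)]
  refine sum_congr rfl fun i hi => ?_
  have hi : i ≠ 0 := Nat.one_le_iff_ne_zero.1 (mem_Icc.1 hi).1
  simp [map_sum, coeff_one, hi, mul_comm]

noncomputable def partWeight (p : ℕ → K) (i c : ℕ) : K :=
  (p i / i) ^ c / c.factorial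

noncomputable def cycleWeight (p : ℕ → K) {N : ℕ} (lam : Fin (N+1) → ℕ) : K :=
  ∏ i, partWeight p i.1 (lam i)

noncomputable def cycleIndexUpTo (p : ℕ → K) (N n : ℕ) : K :=
  ∑ lam ∈ freqPartitionsUpTo N n, cycleWeight p lam

theorem cycleIndexUpTo_zero (p : ℕ → K) (N : ℕ) : cycleIndexUpTo p N 0 = 1 := by
  have : freqPartitionsUpTo N 0 = {0} := by
    ext lam
    rw [mem_singleton]
    refine ⟨fun h => funext fun i => ?_, fun h => by simp [h, mem_freqPartitionsUpTo]⟩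
    rcases eq_or_ne i 0 with rfl | hi
    · exact ((mem_freqPartitionsUpTo (Nat.zero_le N)).1 h).1
    · simpa [Fin.val_ne_zero_iff.2 hi] using le_of_mem_freqPartitionsUpTo h i
  simp [cycleIndexUpTo, this, cycleWeight, partWeight]

theorem mul_partWeight_succ (p : ℕ → K) {i : ℕ} (hi : i ≠ 0) (c : ℕ) :
    (i * (c + 1) : K) * partWeight p i (c + 1) = p i * partWeight p i c := by
  have hi : (i : K) ≠ 0 := Nat.cast_ne_zero.2 hi
  rw [partWeight, partWeight, pow_succ, Nat.factorial_succ]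
  push_cast
  field_simp

theorem mul_cycleWeight_update_succ (p : ℕ → K) {N : ℕ} (lam : Fin (N+1) → ℕ)
    {i : Fin (N+1)} (hi : i ≠ 0) :
    (i.1 * (lam i + 1) : K) * cycleWeight p (Function.update lam i (lam i + 1))
      = p i * cycleWeight p lam := by
  rw [cycleWeight, cycleWeight, Fintype.prod_apply_update fun (l : Fin (N+1)) => partWeight p l.1,
    Fintype.prod_eq_mul_prod_compl i, ← mul_assoc, ← mul_assoc,
    mul_partWeight_succ p (Fin.val_ne_zero_iff.2 hi)]

theorem sum_nat_mul_cycleWeight (p : ℕ → K) {N n : ℕ} (hn : n ≤ N) (i : Fin (N+1)) :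
    ∑ lam ∈ freqPartitionsUpTo N n, (i.1 * lam i : K) * cycleWeight p lam
      = if i.1 ∈ Icc 1 n then p i * cycleIndexUpTo p N (n - i) else 0 := by
  split_ifs with hin
  · rw [mem_Icc] at hin
    have hi : i ≠ 0 := Fin.val_ne_zero_iff.1 (by omega)
    rw [← sum_filter_of_ne (p := fun lam => 0 < lam i)
        fun lam _ h => Nat.pos_of_ne_zero fun h0 => h (by simp [h0]),
      sum_freqPartitionsUpTo_filter_pos hn hi hin.2, cycleIndexUpTo, mul_sum]
    refine sum_congr rfl fun lam _ => ?_
    rw [Function.update_self, ← mul_cycleWeight_update_succ p lam hi]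
    push_cast
    ring
  · refine sum_eq_zero fun lam hlam => ?_
    have hle := le_of_mem_freqPartitionsUpTo hlam i
    rw [mem_Icc, not_and_or, not_le, not_le] at hin
    have hzero : i.1 * lam i = 0 := by
      rcases hin with h | h
      · simp [Nat.lt_one_iff.1 h]
      · exact Nat.mul_eq_zero.2 (Or.inr (Nat.eq_zero_of_not_pos fun h' => by
          have := Nat.le_mul_of_pos_right i.1 h'
          omega))
    simp [← Nat.cast_mul, hzero]

theorem nat_mul_cycleIndexUpTo (p : ℕ → K) {N n : ℕ} (hn : n ≤ N) :
    n * cycleIndexUpTo p N n = ∑ i ∈ Icc 1 n, p i * cycleIndexUpTo p N (n - i) := by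
  have hsplit : (n : K) * cycleIndexUpTo p N n
      = ∑ i : Fin (N+1), ∑ lam ∈ freqPartitionsUpTo N n,
          (i.1 * lam i : K) * cycleWeight p lam := by
    rw [sum_comm, cycleIndexUpTo, mul_sum]
    refine sum_congr rfl fun lam hlam => ?_
    rw [← sum_mul, ← ((mem_freqPartitionsUpTo hn).1 hlam).2]
    push_cast
    rfl
  rw [hsplit, sum_congr rfl fun i _ => sum_nat_mul_cycleWeight p hn i,
    Fin.sum_univ_eq_sum_range
      (fun i => if i ∈ Icc 1 n then p i * cycleIndexUpTo p N (n - i) else 0),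
    sum_ite_mem, inter_eq_right.2]
  exact fun i hi => mem_range.2 (Nat.lt_succ_of_le ((mem_Icc.1 hi).2.trans hn))

theorem cycleIndex_eq_cycleIndexUpTo (p : ℕ → K) (n : ℕ) :
    cycleIndex n p = cycleIndexUpTo p n n := by
  rw [cycleIndex, cycleIndexUpTo, mul_sum]
  refine sum_congr rfl fun lam hlam => ?_
  obtain ⟨h0, hsum⟩ := (mem_freqPartitionsUpTo le_rfl).1 hlam
  have hdvd := prod_pow_mul_factorial_dvd_factorial h0 hsum
  have hD := ne_zero_of_dvd_ne_zero (Nat.factorial_ne_zero n) hdvd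
  rw [Nat.cast_div hdvd (Nat.cast_ne_zero.2 hD), cycleWeight]
  simp only [partWeight, div_pow, div_div, prod_div_distrib]
  have hD' := (Nat.cast_ne_zero (R := K)).2 hD
  have hn : (n.factorial : K) ≠ 0 := Nat.cast_ne_zero.2 (Nat.factorial_ne_zero n)
  push_cast at hD' ⊢
  field_simp

theorem sum_antidiagonalTuple_eq_cycleIndex {k : ℕ} (s α : Fin k → K) (n : ℕ) :
    ∑ m ∈ Nat.antidiagonalTuple k n,
        ∏ j, s j ^ m j / ((m j).factorial : K) * (ascPochhammer K (m j)).eval (α j)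
      = cycleIndex n (fun i => ∑ j, s j ^ i * α j) := by
  have hcoeff := eq_of_nat_mul_eq_sum_Icc (N := n)
    (fun m _ => nat_mul_coeff_prod_pochhammerSeries s α m)
    (fun m hm => nat_mul_cycleIndexUpTo _ hm)
    (by simp [cycleIndexUpTo_zero, coeff_prod_eq_sum_antidiagonalTuple, pochhammerSeries,
      Nat.antidiagonalTuple_zero_right])
  rw [cycleIndex_eq_cycleIndexUpTo, ← hcoeff n le_rfl, coeff_prod_eq_sum_antidiagonalTuple]
  simp [pochhammerSeries]

end Field

theorem dirichlet_moments_cycle_index_general (k n : ℕ) (s α : Fin k → ℝ) :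
    ∑ m ∈ Finset.Nat.antidiagonalTuple k n,
        ∏ j, s j ^ m j / ((m j).factorial : ℝ) * (ascPochhammer ℝ (m j)).eval (α j)
      = cycleIndex n (fun i => ∑ j, s j ^ i * α j) :=
  sum_antidiagonalTuple_eq_cycleIndex s α n

theorem dirichlet_moments_cycle_index (k n : ℕ) (s α : Fin k → ℝ)
    (hα : ∀ j, 0 < α j) :
    ∑ m ∈ Finset.Nat.antidiagonalTuple k n,
        ∏ j, s j ^ m j / ((m j).factorial : ℝ) * (ascPochhammer ℝ (m j)).eval (α j)
      = cycleIndex n (fun i => ∑ j, s j ^ i * α j) :=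
  dirichlet_moments_cycle_index_general k n s α
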